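/- Let κ be an OCF over Σ and let A, C ⊆ Ω_Σ be propositions with Aᶜ ≠ ∅ and Cᶜ ≠ ∅ (so A, C and A ∩ C are non-tautological). Forgetting a proposition X by OCF-conditionalization yields κ|Xᶜ; note (A ∩ C)ᶜ = Aᶜ ∪ Cᶜ. Then the sets of most plausible worlds satisfy: if κ(Aᶜ) < κ(Cᶜ) then (κ|(Aᶜ ∪ Cᶜ))⁻¹(0) = (κ|Aᶜ)⁻¹(0); if κ(Cᶜ) < κ(Aᶜ) then (κ|(Aᶜ ∪ Cᶜ))⁻¹(0) = (κ|Cᶜ)⁻¹(0); and if κ(Aᶜ) = κ(Cᶜ) then (κ|(Aᶜ ∪ Cᶜ))⁻¹(0) = (κ|Aᶜ)⁻¹(0) ∪ (κ|Cᶜ)⁻¹(0). Hence forgetting by OCF-conditionalization satisfies Conjunctive Factoring (CF). -/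
import Mathlib


/-- Possible worlds over a signature `σ`. -/
abbrev World (σ : Type*) := σ → Bool

/-- The natural-number rank of a proposition. -/
noncomputable def nrank {α : Type*} (κ : α → ℕ) (A : Set α) : ℕ := sInf (κ '' A)

/-- Conditionalization `κ|A` of an OCF `κ` by a (nonempty) proposition `A`. -/
noncomputable def condOCF {σ : Type*} (κ : World σ → ℕ) (A : Set (World σ)) : ↥A → ℕ :=
  fun ω => κ ω.val - nrank κ A

/-- The set of most plausible worlds `(κ|X)⁻¹(0)` of the conditionalization,
viewed as a subset of `Ω_σ`. -/
noncomputable def mpCond {σ : Type*} (κ : World σ → ℕ) (X : Set (World σ)) :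
    Set (World σ) :=
  Subtype.val '' ((condOCF κ X) ⁻¹' {0})

lemma nrank_le {α : Type*} (κ : α → ℕ) {X : Set α} {ω : α} (hω : ω ∈ X) :
    nrank κ X ≤ κ ω := Nat.sInf_le ⟨ω, hω, rfl⟩

lemma mem_mpCond {σ : Type*} (κ : World σ → ℕ) (X : Set (World σ)) (ω : World σ) :
    ω ∈ mpCond κ X ↔ ω ∈ X ∧ κ ω ≤ nrank κ X := by
  constructor
  · rintro ⟨⟨w, hw⟩, h0, rfl⟩
    simp only [condOCF, Set.mem_preimage, Set.mem_singleton_iff] at h0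
    exact ⟨hw, Nat.le_of_sub_eq_zero h0⟩
  · rintro ⟨hw, hle⟩
    exact ⟨⟨ω, hw⟩, by simp [condOCF, Nat.sub_eq_zero_of_le hle], rfl⟩

lemma nrank_exists {α : Type*} (κ : α → ℕ) {X : Set α} (hX : X.Nonempty) :
    ∃ ω ∈ X, κ ω = nrank κ X := by
  have : (κ '' X).Nonempty := hX.image κ
  obtain ⟨ω, hω, hκ⟩ := Nat.sInf_mem this
  exact ⟨ω, hω, hκ⟩

lemma nrank_union {α : Type*} (κ : α → ℕ) {X Y : Set α}
    (hX : X.Nonempty) (hY : Y.Nonempty) :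
    nrank κ (X ∪ Y) = min (nrank κ X) (nrank κ Y) := by
  apply le_antisymm
  · obtain ⟨ω, hω, hκ⟩ := nrank_exists κ hX
    obtain ⟨ω', hω', hκ'⟩ := nrank_exists κ hY
    refine le_min (hκ ▸ nrank_le κ (Set.mem_union_left _ hω))
      (hκ' ▸ nrank_le κ (Set.mem_union_right _ hω'))
  · obtain ⟨ω, hω, hκ⟩ := nrank_exists κ (hX.mono Set.subset_union_left)
    rcases hω with hω | hω
    · exact hκ ▸ le_trans (min_le_left _ _) (nrank_le κ hω)
    · exact hκ ▸ le_trans (min_le_right _ _) (nrank_le κ hω)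

/-- Conjunctive Factoring (CF) for forgetting by OCF-conditionalization:
forgetting `A ∩ C` conditionalizes on `Aᶜ ∪ Cᶜ`, and the most plausible worlds
factor through forgetting `A`, forgetting `C`, or their union, according to
the comparison of `κ(Aᶜ)` and `κ(Cᶜ)`. -/
theorem stmt16 {σ : Type*} [Fintype σ] [Nonempty σ]
    (κ : World σ → ℕ) (h : ∃ ω, κ ω = 0)
    (A C : Set (World σ)) (hA : Aᶜ.Nonempty) (hC : Cᶜ.Nonempty) :
    (nrank κ Aᶜ < nrank κ Cᶜ → mpCond κ (Aᶜ ∪ Cᶜ) = mpCond κ Aᶜ) ∧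
    (nrank κ Cᶜ < nrank κ Aᶜ → mpCond κ (Aᶜ ∪ Cᶜ) = mpCond κ Cᶜ) ∧
    (nrank κ Aᶜ = nrank κ Cᶜ → mpCond κ (Aᶜ ∪ Cᶜ) = mpCond κ Aᶜ ∪ mpCond κ Cᶜ) := by
  have hU := nrank_union κ hA hC
  refine ⟨?_, ?_, ?_⟩
  · intro hlt
    ext ω
    simp only [mem_mpCond, hU, min_eq_left hlt.le, Set.mem_union]
    constructor
    · rintro ⟨hw | hw, hle⟩
      · exact ⟨hw, hle⟩
      · exact absurd (le_trans (nrank_le κ hw) hle) (not_le.mpr hlt)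
    · rintro ⟨hw, hle⟩; exact ⟨Or.inl hw, hle⟩
  · intro hlt
    ext ω
    simp only [mem_mpCond, hU, min_eq_right hlt.le, Set.mem_union]
    constructor
    · rintro ⟨hw | hw, hle⟩
      · exact absurd (le_trans (nrank_le κ hw) hle) (not_le.mpr hlt)
      · exact ⟨hw, hle⟩
    · rintro ⟨hw, hle⟩; exact ⟨Or.inr hw, hle⟩
  · intro heq
    ext ω
    simp only [mem_mpCond, hU, heq, min_self, Set.mem_union]
    constructor
    · rintro ⟨hw | hw, hle⟩
      · exact Or.inl ⟨hw, heq ▸ hle⟩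
      · exact Or.inr ⟨hw, hle⟩
    · rintro (⟨hw, hle⟩ | ⟨hw, hle⟩)
      · exact ⟨Or.inl hw, heq ▸ hle⟩
      · exact ⟨Or.inr hw, hle⟩
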